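/- Let k ≥ 1 be an integer and define F_k(s) = (1+2k)·(ζ(s) - ∑_{r=1}^{k-1} r^{-s}) - 2·(ζ(s-1) - ∑_{r=1}^{k-1} r^{1-s}), where ζ is the Riemann zeta function. Then: (i) for every s ∈ ℂ with Re(s) > 2, the series ∑_{n=0}^∞ (1-2n)·(n+k)^{-s} converges and equals F_k(s); (ii) F_k(0) = 2/3 - k - k². -/

import Mathlib

/-!
Writing `1 - 2n = (1 + 2k) - 2(n + k)` splits the series into `(1 + 2k) ∑ (n + k)^{-s}` and
`-2 ∑ (n + k)^{1-s}`, which are tails of the Dirichlet series of `ζ(s)` and `ζ(s - 1)`.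
At `s = 0` the finite sums become `k - 1` and `k(k - 1)/2`, and `ζ(0) = -1/2`, `ζ(-1) = -1/12`.
-/

/-- `F_k(s) = (1+2k)·(ζ(s) - ∑_{r=1}^{k-1} r^{-s}) - 2·(ζ(s-1) - ∑_{r=1}^{k-1} r^{1-s})`. -/
noncomputable def Fk (k : ℕ) (s : ℂ) : ℂ :=
  (1 + 2 * (k : ℂ)) * (riemannZeta s - ∑ r ∈ Finset.range (k - 1), ((r : ℂ) + 1) ^ (-s))
    - 2 * (riemannZeta (s - 1) - ∑ r ∈ Finset.range (k - 1), ((r : ℂ) + 1) ^ (1 - s))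

open Complex Finset

lemma hasSum_nat_add_one_cpow_neg_riemannZeta {s : ℂ} (hs : 1 < s.re) :
    HasSum (fun n : ℕ => ((n : ℂ) + 1) ^ (-s)) (riemannZeta s) := by
  have hsum : Summable fun n : ℕ => 1 / ((n : ℂ) + 1) ^ s := by
    simpa using (summable_nat_add_iff 1).mpr (summable_one_div_nat_cpow.mpr hs)
  simpa [cpow_neg, zeta_eq_tsum_one_div_nat_add_one_cpow hs] using hsum.hasSum

lemma hasSum_nat_add_succ_cpow_neg (m : ℕ) {s : ℂ} (hs : 1 < s.re) :
    HasSum (fun n : ℕ => ((n : ℂ) + (m + 1)) ^ (-s))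
      (riemannZeta s - ∑ r ∈ range m, ((r : ℂ) + 1) ^ (-s)) := by
  simpa [add_assoc] using
    (hasSum_nat_add_iff' m).mpr (hasSum_nat_add_one_cpow_neg_riemannZeta hs)

lemma cpow_one_sub {x : ℂ} (hx : x ≠ 0) (s : ℂ) : x ^ (1 - s) = x * x ^ (-s) := by
  rw [sub_eq_add_neg, cpow_add _ _ hx, cpow_one]

lemma sum_range_natCast_add_one (m : ℕ) : ∑ r ∈ range m, ((r : ℂ) + 1) = m * (m + 1) / 2 := by
  induction m with
  | zero => simp
  | succ n ih => rw [sum_range_succ, ih]; push_cast; ring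

lemma riemannZeta_neg_one : riemannZeta (-1) = -1 / 12 := by
  have := riemannZeta_neg_nat_eq_bernoulli 1
  norm_num [bernoulli] at this
  rw [this, neg_div]

lemma hasSum_Fk {k : ℕ} (hk : 1 ≤ k) {s : ℂ} (hs : 2 < s.re) :
    HasSum (fun n : ℕ => (1 - 2 * (n : ℂ)) * ((n : ℂ) + k) ^ (-s)) (Fk k s) := by
  obtain ⟨m, rfl⟩ := Nat.exists_eq_add_of_le' hk
  have hζs := hasSum_nat_add_succ_cpow_neg m (s := s) (by linarith)
  have hζs₁ := hasSum_nat_add_succ_cpow_neg m (s := s - 1) (by simp; linarith)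
  rw [neg_sub] at hζs₁
  have hne (n : ℕ) : (n : ℂ) + (m + 1) ≠ 0 := by exact_mod_cast (n + m).succ_ne_zero
  have hterm : (fun n : ℕ => (1 - 2 * (n : ℂ)) * ((n : ℂ) + ↑(m + 1)) ^ (-s)) = fun n : ℕ =>
      (1 + 2 * (m + 1 : ℂ)) * ((n : ℂ) + (m + 1)) ^ (-s) - 2 * ((n : ℂ) + (m + 1)) ^ (1 - s) := by
    funext n
    rw [cpow_one_sub (hne n)]
    push_cast
    ring
  have hFk : Fk (m + 1) s =
      (1 + 2 * (m + 1 : ℂ)) * (riemannZeta s - ∑ r ∈ range m, ((r : ℂ) + 1) ^ (-s))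
      - 2 * (riemannZeta (s - 1) - ∑ r ∈ range m, ((r : ℂ) + 1) ^ (1 - s)) := by
    simp only [Fk, Nat.add_sub_cancel, Nat.cast_succ]
  rw [hterm, hFk]
  exact (hζs.mul_left _).sub (hζs₁.mul_left 2)

lemma Fk_zero {k : ℕ} (hk : 1 ≤ k) : Fk k 0 = 2 / 3 - k - k ^ 2 := by
  obtain ⟨m, rfl⟩ := Nat.exists_eq_add_of_le' hk
  simp only [Fk, Nat.add_sub_cancel, neg_zero, cpow_zero, zero_sub, sub_zero, cpow_one,
    riemannZeta_zero, riemannZeta_neg_one, sum_const, card_range, nsmul_eq_mul, mul_one,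
    sum_range_natCast_add_one]
  push_cast
  ring

/-- For an integer `k ≥ 1`:
(i) for `Re(s) > 2` the series `∑_{n=0}^∞ (1-2n)·(n+k)^{-s}` converges and equals `F_k(s)`;
(ii) `F_k(0) = 2/3 - k - k²`. -/
theorem stmt_11 (k : ℕ) (hk : 1 ≤ k) :
    (∀ s : ℂ, 2 < s.re →
      HasSum (fun n : ℕ => (1 - 2 * (n : ℂ)) * ((n : ℂ) + (k : ℂ)) ^ (-s)) (Fk k s)) ∧
    Fk k 0 = 2 / 3 - (k : ℂ) - (k : ℂ) ^ 2 :=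
  ⟨fun _ hs => hasSum_Fk hk hs, Fk_zero hk⟩
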